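/- For 0 \le k \le n and q a nonzero element of a field such that [1]_q, ..., [k]_q, [k]_q! are all nonzero and the q-integers [0]_q,...,[k]_q are pairwise distinct, the q-Stirling numbers of the second kind satisfy S_q(n,k) = q^{-\binom{k}{2}}/[k]_q! \cdot \sum_{j=0}^{k} (-1)^j q^{\binom{j}{2}} \binom{k}{j}_q [k-j]_q^n, where \binom{k}{j}_q is the q-binomial coefficient. -/
import Mathlib


/-- The q-integer `[m]_q = 1 + q + ... + q^(m-1)`. -/
def qint {F : Type*} [Field F] (q : F) (m : ℕ) : F :=
  ∑ i ∈ Finset.range m, q ^ i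

/-- The q-factorial `[m]_q! = [1]_q [2]_q ⋯ [m]_q`. -/
def qfact {F : Type*} [Field F] (q : F) (m : ℕ) : F :=
  ∏ i ∈ Finset.range m, qint q (i+1)

/-- The q-binomial coefficient `[n choose k]_q = [n]_q!/([k]_q![n-k]_q!)`. -/
def qbinom {F : Type*} [Field F] (q : F) (n k : ℕ) : F :=
  qfact q n / (qfact q k * qfact q (n - k))

namespace Stmt4Aux

variable {F : Type*} [Field F]

lemma qint_zero (q : F) : qint q 0 = 0 := by simp [qint]

lemma qint_split (q : F) (a b : ℕ) : qint q (a + b) = qint q a + q ^ a * qint q b := by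
  simp only [qint, Finset.sum_range_add, pow_add, ← Finset.mul_sum]

lemma qfact_zero (q : F) : qfact q 0 = 1 := by simp [qfact]

lemma qfact_succ (q : F) (m : ℕ) : qfact q (m + 1) = qfact q m * qint q (m + 1) :=
  Finset.prod_range_succ _ m

lemma choose_succ_two (i : ℕ) : (i+1).choose 2 = i.choose 2 + i := by
  rw [show 2 = 1 + 1 from rfl, Nat.choose_succ_succ, Nat.choose_one_right]
  exact Nat.add_comm _ _

variable (q : F) (k : ℕ)
variable (hne : ∀ i : ℕ, 1 ≤ i → i ≤ k → qint q i ≠ 0)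

include hne

lemma qfact_ne {m : ℕ} (hm : m ≤ k) : qfact q m ≠ 0 := by
  unfold qfact
  refine Finset.prod_ne_zero_iff.mpr fun i hi => ?_
  simp only [Finset.mem_range] at hi
  exact hne (i+1) (by omega) (by omega)

omit hne in
lemma qbinom_zero_right {n : ℕ} (h : qfact q n ≠ 0) : qbinom q n 0 = 1 := by
  simp [qbinom, qfact_zero, div_self h]

omit hne in
lemma qbinom_self {n : ℕ} (h : qfact q n ≠ 0) : qbinom q n n = 1 := by
  simp [qbinom, qfact_zero, div_self h]

lemma qPascal (j d : ℕ) (h : j + d + 2 ≤ k) :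
    qbinom q (j + d + 2) (j+1) = qbinom q (j + d + 1) j + q^(j+1) * qbinom q (j + d + 1) (j+1) := by
  have e1 : j + d + 2 - (j + 1) = d + 1 := by omega
  have e2 : j + d + 1 - j = d + 1 := by omega
  have e3 : j + d + 1 - (j + 1) = d := by omega
  simp only [qbinom, e1, e2, e3]
  rw [show j + d + 2 = (j + d + 1) + 1 from rfl, qfact_succ q (j+d+1),
    qfact_succ q j, qfact_succ q d,
    show j + d + 1 + 1 = (j + 1) + (d + 1) by omega, qint_split q (j+1) (d+1)]
  have h1 : qfact q j ≠ 0 := qfact_ne q k hne (by omega)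
  have h2 : qfact q d ≠ 0 := qfact_ne q k hne (by omega)
  have h3 : qfact q (j + d + 1) ≠ 0 := qfact_ne q k hne (by omega)
  have h4 : qint q (j + 1) ≠ 0 := hne (j+1) (by omega) (by omega)
  have h5 : qint q (d + 1) ≠ 0 := hne (d+1) (by omega) (by omega)
  field_simp

lemma qint_mul_qbinom (i d : ℕ) (h : i + d + 1 ≤ k) :
    qint q (i+1) * qbinom q (i + d + 1) (i+1) = qint q (i + d + 1) * qbinom q (i + d) i := by
  have e1 : i + d + 1 - (i + 1) = d := by omega
  have e2 : i + d - i = d := by omega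
  simp only [qbinom, e1, e2]
  rw [show i + d + 1 = (i + d) + 1 from rfl, qfact_succ q (i+d), qfact_succ q i]
  have h1 : qfact q i ≠ 0 := qfact_ne q k hne (by omega)
  have h2 : qfact q d ≠ 0 := qfact_ne q k hne (by omega)
  have h3 : qfact q (i + d) ≠ 0 := qfact_ne q k hne (by omega)
  have h4 : qint q (i + 1) ≠ 0 := hne (i+1) (by omega) (by omega)
  have h5 : qint q (i + d + 1) ≠ 0 := hne (i+d+1) (by omega) (by omega)
  field_simp

omit hne in
/-- The sum appearing in the explicit formula. -/
def gsum (q : F) (m l : ℕ) : F :=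
  ∑ j ∈ Finset.range (l+1), (-1) ^ j * q ^ (j.choose 2) * qbinom q l j * qint q (l - j) ^ m

lemma g_zero (l : ℕ) (hl : l + 1 ≤ k) : gsum q 0 (l+1) = 0 := by
  have hfl : qfact q l ≠ 0 := qfact_ne q k hne (by omega)
  have hfl1 : qfact q (l+1) ≠ 0 := qfact_ne q k hne hl
  simp only [gsum, pow_zero, mul_one]
  rw [Finset.sum_range_succ, Finset.sum_range_succ']
  have hmid : (∑ i ∈ Finset.range l, ((-1:F)) ^ (i+1) * q ^ ((i+1).choose 2) * qbinom q (l+1) (i+1))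
      = (-1:F)^l * q^(l.choose 2 + l) * qbinom q l l
        - (-1:F)^0 * q^((0:ℕ).choose 2 + 0) * qbinom q l 0 := by
    rw [← Finset.sum_range_sub (fun i => (-1:F)^i * q^(i.choose 2 + i) * qbinom q l i) l]
    apply Finset.sum_congr rfl
    intro i hi
    simp only [Finset.mem_range] at hi
    obtain ⟨d, rfl⟩ : ∃ d, l = i + d + 1 := ⟨l - i - 1, by omega⟩
    rw [show i + d + 1 + 1 = i + d + 2 from rfl, qPascal q k hne i d (by omega),
      choose_succ_two i]
    ring
  rw [hmid, qbinom_self q hfl, qbinom_zero_right q hfl, qbinom_self q hfl1,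
    qbinom_zero_right q hfl1, choose_succ_two l]
  norm_num
  ring

lemma g_rec (m l : ℕ) (hl : l + 1 ≤ k) :
    gsum q (m+1) (l+1)
      = q^l * qint q (l+1) * gsum q m l + qint q (l+1) * gsum q m (l+1) := by
  have hsplit : ∀ j ∈ Finset.range (l+2),
      qint q (l+1-j) = qint q (l+1) - q^(l+1-j) * qint q j := by
    intro j hj
    simp only [Finset.mem_range] at hj
    have h1 := qint_split q (l+1-j) j
    rw [Nat.sub_add_cancel (by omega)] at h1
    rw [h1]; ring
  have step1 : gsum q (m+1) (l+1)
      = ∑ j ∈ Finset.range (l+2),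
          ((-1:F)^j * q^(j.choose 2) * qbinom q (l+1) j * qint q (l+1-j)^m * qint q (l+1)
            - (-1:F)^j * q^(j.choose 2) * qbinom q (l+1) j * q^(l+1-j) * qint q j * qint q (l+1-j)^m) := by
    unfold gsum
    apply Finset.sum_congr rfl
    intro j hj
    linear_combination ((-1:F)^j * q^(j.choose 2) * qbinom q (l+1) j * qint q (l+1-j)^m) * (hsplit j hj)
  rw [step1, Finset.sum_sub_distrib]
  have hfirst : (∑ j ∈ Finset.range (l+2),
      (-1:F)^j * q^(j.choose 2) * qbinom q (l+1) j * qint q (l+1-j)^m * qint q (l+1))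
      = qint q (l+1) * gsum q m (l+1) := by
    rw [gsum, Finset.mul_sum]
    exact Finset.sum_congr rfl fun j _ => by ring
  have hsecond : (∑ j ∈ Finset.range (l+2),
      (-1:F)^j * q^(j.choose 2) * qbinom q (l+1) j * q^(l+1-j) * qint q j * qint q (l+1-j)^m)
      = -(q^l * qint q (l+1) * gsum q m l) := by
    rw [Finset.sum_range_succ']
    have h0 : ((-1:F)^(0:ℕ) * q^((0:ℕ).choose 2) * qbinom q (l+1) 0 * q^(l+1-0) * qint q 0 * qint q (l+1-0)^m) = 0 := by
      simp [qint_zero]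
    rw [h0, add_zero, gsum, Finset.mul_sum, ← Finset.sum_neg_distrib]
    apply Finset.sum_congr rfl
    intro i hi
    simp only [Finset.mem_range] at hi
    obtain ⟨d, rfl⟩ : ∃ d, l = i + d := ⟨l - i, by omega⟩
    rw [show i + d + 1 - (i + 1) = d by omega, show i + d - i = d by omega,
      choose_succ_two i]
    linear_combination ((-1:F)^(i+1) * q^(i.choose 2 + i + d) * qint q d ^ m) * (qint_mul_qbinom q k hne i d hl)
  rw [hfirst, hsecond]
  ring

end Stmt4Aux

theorem stmt4 {F : Type*} [Field F] (q : F) (hq : q ≠ 0) (n k : ℕ) (hkn : k ≤ n)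
    (hne : ∀ i : ℕ, 1 ≤ i → i ≤ k → qint q i ≠ 0)
    (hfact : qfact q k ≠ 0)
    (hdist : ∀ i j : ℕ, i ≤ k → j ≤ k → i ≠ j → qint q i ≠ qint q j)
    (S : ℕ → ℤ → F)
    (hbound : ∀ (m : ℕ) (l : ℤ), (l < 0 ∨ (m : ℤ) < l) → S m l = 0)
    (hinit : S 0 0 = 1)
    (hrec : ∀ (m : ℕ) (l : ℤ), 0 ≤ l →
      S (m+1) l = S m (l-1) + qint q l.toNat * S m l) :
    S n k = q ^ (-(k.choose 2 : ℤ)) / qfact q k *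
      ∑ j ∈ Finset.range (k+1),
        (-1) ^ j * q ^ (j.choose 2) * qbinom q k j * qint q (k - j) ^ n := by
  open Stmt4Aux in
  suffices H : ∀ m : ℕ, ∀ l : ℕ, l ≤ k →
      (l ≤ m → q ^ (l.choose 2) * qfact q l * S m (l : ℤ) = Stmt4Aux.gsum q m l) ∧
      (m < l → Stmt4Aux.gsum q m l = 0) by
    have hmain := (H n k le_rfl).1 hkn
    rw [show (∑ j ∈ Finset.range (k+1),
        (-1:F) ^ j * q ^ (j.choose 2) * qbinom q k j * qint q (k - j) ^ n)
      = Stmt4Aux.gsum q n k from rfl, ← hmain, zpow_neg, zpow_natCast]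
    field_simp
  intro m
  induction m with
  | zero =>
    intro l hlk
    constructor
    · intro hl
      have hl0 : l = 0 := Nat.le_zero.mp hl
      subst hl0
      norm_num [Stmt4Aux.gsum, qbinom, Stmt4Aux.qfact_zero, hinit]
    · intro h0
      obtain ⟨l', rfl⟩ : ∃ l', l = l' + 1 := ⟨l - 1, by omega⟩
      exact Stmt4Aux.g_zero q k hne l' hlk
  | succ m ih =>
    intro l hlk
    cases l with
    | zero =>
      constructor
      · intro _
        have h := hrec m 0 le_rfl
        have hb : S m (-1) = 0 := hbound m (-1) (Or.inl (by norm_num))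
        rw [show (0:ℤ) - 1 = -1 from rfl, hb] at h
        simp only [Int.toNat_zero, Stmt4Aux.qint_zero, zero_mul, zero_add, add_zero] at h
        simp [Stmt4Aux.gsum, h, Stmt4Aux.qint_zero, qbinom, Stmt4Aux.qfact_zero]
      · intro h; omega
    | succ l' =>
      have hg := Stmt4Aux.g_rec q k hne m l' hlk
      constructor
      · intro hlm
        have h1 : q ^ (l'.choose 2) * qfact q l' * S m (l' : ℤ) = Stmt4Aux.gsum q m l' :=
          (ih l' (by omega)).1 (by omega)
        have h2 : q ^ ((l'+1).choose 2) * qfact q (l'+1) * S m ((l'+1 : ℕ) : ℤ)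
            = Stmt4Aux.gsum q m (l'+1) := by
          by_cases hc : l' + 1 ≤ m
          · exact (ih (l'+1) hlk).1 hc
          · have hs0 : S m ((l'+1 : ℕ) : ℤ) = 0 :=
              hbound m _ (Or.inr (by exact_mod_cast (by omega : m < l' + 1)))
            have hg0 : Stmt4Aux.gsum q m (l'+1) = 0 := (ih (l'+1) hlk).2 (by omega)
            rw [hs0, hg0, mul_zero]
        have hrec' := hrec m ((l'+1 : ℕ) : ℤ) (by positivity)
        rw [show (((l'+1:ℕ):ℤ)).toNat = l' + 1 by omega,
          show ((l'+1:ℕ):ℤ) - 1 = ((l' : ℕ) : ℤ) by push_cast; ring] at hrec'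
        rw [hrec', hg, Stmt4Aux.choose_succ_two l', Stmt4Aux.qfact_succ q l']
        rw [Stmt4Aux.choose_succ_two l', Stmt4Aux.qfact_succ q l'] at h2
        linear_combination (q^l' * qint q (l'+1)) * h1 + qint q (l'+1) * h2
      · intro hml
        rw [hg, (ih l' (by omega)).2 (by omega), (ih (l'+1) hlk).2 (by omega)]
        ring
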